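/- arXiv:2011.10978 — 2 statements merged into one kernel-verified Lean document; each statement's English description precedes it below -/
import Mathlib

section
/- For any two p-orderings of a subset S ⊆ ℤ, the associated p-sequences are the same: the minimum of v_p(∏_{j<i}(x - a_j)) at each step i is independent of the choices made. -/
/-- `a` is a `p`-ordering of the finite set `S ⊆ ℤ`: the first `S.card` terms of `a`
enumerate `S` without repetition, and each `a i` minimizes the `p`-adic valuation of the
product of its differences with the previously chosen elements, among the remaining
elements of `S`. -/
def IsPOrdering (p : ℕ) (S : Finset ℤ) (a : ℕ → ℤ) : Prop :=
  (∀ i < S.card, a i ∈ S) ∧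
  (∀ i < S.card, ∀ j < S.card, a i = a j → i = j) ∧
  (∀ i, 0 < i → i < S.card → ∀ x ∈ S, (∀ j < i, x ≠ a j) →
    padicValInt p (∏ j ∈ Finset.range i, (a i - a j)) ≤
      padicValInt p (∏ j ∈ Finset.range i, (x - a j)))


/-!
Fix a `p`-ordering `a` of `S` and write `A k = v_p(∏_{j<k} (a k - a j))`. By minimality,
`p ^ A k` divides `∏_{j<k} (x - a j)` for every `x ∈ S`. Peeling off the Newton basis
polynomial `∏_{j<k} (X - a j)` one degree at a time shows that if `p ^ N` divides the values of
a polynomial of degree `< k` at `a 0, …, a (k-1)`, then it divides its values on all of `S`.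
Applied to `g - ∏_{j<k} (X - a j)` for a monic `g` of degree `k`, this yields some `m ≤ k` with
`v_p(g (a m)) ≤ A k`. Taking for `g` the basis polynomial of a second `p`-ordering `b`, the
point `a m` is a candidate in the minimality condition for `b k`, so `B k ≤ A k`; by symmetry
the two `p`-sequences agree.
-/

open Polynomial Finset Lagrange

def pSequence (p : ℕ) (a : ℕ → ℤ) (k : ℕ) : ℕ :=
  padicValInt p (∏ j ∈ range k, (a k - a j))

theorem pow_sub_padicValInt_dvd_of_pow_dvd_mul {p : ℕ} [Fact p.Prime] {N : ℕ} {c y : ℤ}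
    (hy : y ≠ 0) (h : (p : ℤ) ^ N ∣ c * y) : (p : ℤ) ^ (N - padicValInt p y) ∣ c := by
  rcases eq_or_ne c 0 with rfl | hc
  · exact dvd_zero _
  rw [padicValInt_dvd_iff] at h ⊢
  rcases h with h | h
  · exact absurd h (mul_ne_zero hc hy)
  rw [padicValInt.mul hc hy] at h
  exact Or.inr (by omega)

theorem Polynomial.degree_sub_C_coeff_mul_lt {R : Type*} [CommRing R] {f g : R[X]} {k : ℕ}
    (hf : f.Monic) (hfk : f.natDegree = k) (hg : g.degree ≤ k) :
    (g - C (g.coeff k) * f).degree < k := by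
  rw [degree_lt_iff_coeff_zero]
  intro m hm
  rw [coeff_sub, coeff_C_mul]
  rcases hm.eq_or_lt with rfl | hm
  · rw [← hfk, hf.coeff_natDegree, mul_one, sub_self]
  · rw [coeff_eq_zero_of_degree_lt (hg.trans_lt (by exact_mod_cast hm)),
      coeff_eq_zero_of_natDegree_lt (by omega : f.natDegree < m), mul_zero, sub_zero]

namespace IsPOrdering

variable {p : ℕ} {S : Finset ℤ} {a : ℕ → ℤ}

theorem prod_sub_ne_zero (ha : IsPOrdering p S a) {i : ℕ} (hi : i < S.card) :
    ∏ j ∈ range i, (a i - a j) ≠ 0 :=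
  prod_ne_zero_iff.mpr fun j hj => sub_ne_zero.mpr fun h =>
    (mem_range.mp hj).ne' (ha.2.1 i hi j ((mem_range.mp hj).trans hi) h)

theorem pow_pSequence_dvd_prod_sub (ha : IsPOrdering p S a) {i : ℕ} (hi : i < S.card) {x : ℤ}
    (hx : x ∈ S) : (p : ℤ) ^ pSequence p a i ∣ ∏ j ∈ range i, (x - a j) := by
  by_cases hnew : ∀ j < i, x ≠ a j
  · rcases Nat.eq_zero_or_pos i with rfl | hi0
    · simp [pSequence]
    · exact (pow_dvd_pow _ (ha.2.2 i hi0 hi x hx hnew)).trans (padicValInt_dvd _)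
  · push Not at hnew
    obtain ⟨j, hj, rfl⟩ := hnew
    rw [prod_eq_zero (mem_range.mpr hj) (sub_self _)]
    exact dvd_zero _

theorem pow_dvd_eval_of_pow_dvd_eval_lt [Fact p.Prime] (ha : IsPOrdering p S a) {N k : ℕ}
    (hk : k ≤ S.card) {h : ℤ[X]} (hdeg : h.degree < k)
    (hdvd : ∀ m < k, (p : ℤ) ^ N ∣ h.eval (a m)) {x : ℤ} (hx : x ∈ S) :
    (p : ℤ) ^ N ∣ h.eval x := by
  induction k generalizing h x with
  | zero => simp [degree_eq_bot.mp (Nat.WithBot.lt_zero_iff.mp hdeg)]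
  | succ k ih =>
    have hkS : k < S.card := hk
    set F := nodal (range k) a
    set r := h - C (h.coeff k) * F
    have hr_deg : r.degree < k :=
      degree_sub_C_coeff_mul_lt nodal_monic (by simp [F, natDegree_nodal])
        (Order.le_of_lt_succ (by exact_mod_cast hdeg))
    have hr_node : ∀ m < k, r.eval (a m) = h.eval (a m) := fun m hm => by
      simp [r, F, eval_nodal_at_node (mem_range.mpr hm)]
    have hr_dvd : ∀ y ∈ S, (p : ℤ) ^ N ∣ r.eval y := fun y hy =>
      ih hkS.le hr_deg (fun m hm => hr_node m hm ▸ hdvd m (by omega)) hy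
    have hc : (p : ℤ) ^ (N - pSequence p a k) ∣ h.coeff k := by
      refine pow_sub_padicValInt_dvd_of_pow_dvd_mul (ha.prod_sub_ne_zero hkS) ?_
      have : h.coeff k * ∏ j ∈ range k, (a k - a j) = h.eval (a k) - r.eval (a k) := by
        simp [r, F, eval_nodal]
      rw [this]
      exact dvd_sub (hdvd k k.lt_succ_self) (hr_dvd _ (ha.1 k hkS))
    -- `p ^ pSequence p a k` divides `F` on all of `S`, supplying the power of `p` that
    -- `h.coeff k` may lack
    have hcF : (p : ℤ) ^ N ∣ h.coeff k * F.eval x := by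
      refine (pow_dvd_pow _ (by omega : N ≤ N - pSequence p a k + pSequence p a k)).trans ?_
      rw [pow_add, eval_nodal]
      exact mul_dvd_mul hc (ha.pow_pSequence_dvd_prod_sub hkS hx)
    have : h.eval x = h.coeff k * F.eval x + r.eval x := by simp [r]
    rw [this]
    exact dvd_add hcF (hr_dvd x hx)

theorem exists_not_pow_succ_dvd_eval [Fact p.Prime] (ha : IsPOrdering p S a) {k : ℕ}
    (hk : k < S.card) {g : ℤ[X]} (hg : g.Monic) (hgk : g.natDegree = k) :
    ∃ m ≤ k, ¬ (p : ℤ) ^ (pSequence p a k + 1) ∣ g.eval (a m) := by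
  by_contra! hdvd
  set F := nodal (range k) a
  have hdeg : (g - F).degree < k := by
    have hgF : g.degree = F.degree := by
      rw [degree_eq_natDegree hg.ne_zero, hgk, degree_nodal, card_range]
    simpa [hgF, F, degree_nodal] using
      degree_sub_lt_left hgF hg.ne_zero (by rw [hg.leadingCoeff, nodal_monic.leadingCoeff])
  have hdiff := ha.pow_dvd_eval_of_pow_dvd_eval_lt hk.le hdeg
    (fun m hm => by simpa [F, eval_nodal_at_node (mem_range.mpr hm)] using hdvd m hm.le)
    (ha.1 k hk)
  have hF : (p : ℤ) ^ (pSequence p a k + 1) ∣ ∏ j ∈ range k, (a k - a j) := by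
    simpa [F, eval_nodal] using dvd_sub (hdvd k le_rfl) hdiff
  rcases (padicValInt_dvd_iff _ _).mp hF with h0 | hle
  · exact ha.prod_sub_ne_zero hk h0
  · exact Nat.not_succ_le_self _ hle

theorem pSequence_le [Fact p.Prime] {b : ℕ → ℤ} (ha : IsPOrdering p S a)
    (hb : IsPOrdering p S b) {k : ℕ} (hk : k < S.card) : pSequence p b k ≤ pSequence p a k := by
  rcases Nat.eq_zero_or_pos k with rfl | hk0
  · simp [pSequence]
  obtain ⟨m, hm, hndvd⟩ :=
    ha.exists_not_pow_succ_dvd_eval hk (nodal_monic (s := range k) (v := b))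
      (by simp [natDegree_nodal])
  rw [eval_nodal, padicValInt_dvd_iff] at hndvd
  push Not at hndvd
  have hnew : ∀ j < k, a m ≠ b j := fun j hj h =>
    hndvd.1 (prod_eq_zero (mem_range.mpr hj) (by rw [h, sub_self]))
  exact (hb.2.2 k hk0 hk (a m) (ha.1 m (hm.trans_lt hk)) hnew).trans (by omega)

end IsPOrdering

theorem pSequence_unique (p : ℕ) (hp : p.Prime) (S : Finset ℤ) (a b : ℕ → ℤ)
    (ha : IsPOrdering p S a) (hb : IsPOrdering p S b) :
    ∀ i < S.card,
      padicValInt p (∏ j ∈ Finset.range i, (a i - a j)) =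
        padicValInt p (∏ j ∈ Finset.range i, (b i - b j)) := by
  have : Fact p.Prime := ⟨hp⟩
  intro i hi
  exact le_antisymm (hb.pSequence_le ha hi) (ha.pSequence_le hb hi)
end

section
/- Let p be a prime with 3 < p, and f ∈ ℤ_{p³}[x]. If f has two roots j + pα₁ + p²β₁ and j + pα₂ + p²β₂ in ℤ_{p³} with α₁ ≢ α₂ (mod p), then f(j) ≡ 0 (mod p²) and f'(j) ≡ 0 (mod p), and for every root j + pα + p²β of f, the whole subtree {j + pα + p²γ | γ ∈ {0,...,p-1}} consists of roots of f. -/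
/-!
Write `π = p`. Taylor expansion of `f` between the two given roots, which differ by `π u` with
`π ∤ u`, gives `π (f'(x₂) u + π k u²) = 0`. In `ℤ/p³` the annihilator of `p` is `(p²)`, so `p`
divides `f'(x₂) u` and hence `f'(x₂)`; as `f'(x₂) ≡ f'(j) (mod p)`, also `p ∣ f'(j)`. Then
`f(j) ≡ 0 (mod p²)` follows by expanding at `j`, and moving a root by `p² c` changes `f` by
`f'(x) p² c ∈ p³ ℤ/p³ = 0`.
-/

open Polynomial

namespace Polynomial

variable {R : Type*} [CommRing R] {π : R}

theorem dvd_eval_of_dvd_sub {g : R[X]} {x y : R} (hxy : π ∣ x - y) (hy : π ∣ g.eval y) :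
    π ∣ g.eval x := by
  have h := hxy.trans (sub_dvd_eval_sub x y g)
  simpa using dvd_add h hy

theorem sq_dvd_eval_of_eval_eq_zero {f : R[X]} {x j : R} (hx : f.eval x = 0) (hxj : π ∣ x - j)
    (hf' : π ∣ f.derivative.eval j) : π ^ 2 ∣ f.eval j := by
  obtain ⟨k, hk⟩ := binomExpansion f j (x - j)
  obtain ⟨a, ha⟩ := hxj
  obtain ⟨b, hb⟩ := hf'
  rw [add_sub_cancel, hx, ha, hb] at hk
  exact ⟨-(b * a + k * a ^ 2), by linear_combination -hk⟩

theorem eval_add_sq_mul_eq_zero {f : R[X]} {x j : R} (hπ : π ^ 3 = 0)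
    (hf' : π ∣ f.derivative.eval j) (hx : f.eval x = 0) (hxj : π ∣ x - j) (c : R) :
    f.eval (x + π ^ 2 * c) = 0 := by
  obtain ⟨d, hd⟩ := dvd_eval_of_dvd_sub hxj hf'
  have hsq : (π ^ 2 * c) ^ 2 = 0 := by linear_combination π * c ^ 2 * hπ
  rw [eval_add_of_sq_eq_zero f x _ hsq, hx, hd]
  linear_combination d * c * hπ

theorem dvd_derivative_eval_of_eval_add_eq {f : R[X]} {x u : R} (hπ : Prime π)
    (hann : ∀ w, π * w = 0 → π ∣ w) (hu : ¬ π ∣ u) (h : f.eval (x + π * u) = f.eval x) :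
    π ∣ f.derivative.eval x := by
  obtain ⟨k, hk⟩ := binomExpansion f x (π * u)
  have hzero : π * (f.derivative.eval x * u + π * (k * u ^ 2)) = 0 := by
    linear_combination h - hk
  have hdvd : π ∣ f.derivative.eval x * u :=
    (dvd_add_left (dvd_mul_right π _)).mp (hann _ hzero)
  exact (hπ.dvd_or_dvd hdvd).resolve_right hu

end Polynomial

namespace ZMod

theorem castHom_eq_zero_iff_natCast_dvd {p n : ℕ} [NeZero n] (h : p ∣ n) (a : ZMod n) :
    castHom h (ZMod p) a = 0 ↔ (p : ZMod n) ∣ a := by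
  constructor
  · intro ha
    rw [castHom_apply, cast_eq_val, natCast_eq_zero_iff] at ha
    obtain ⟨c, hc⟩ := ha
    exact ⟨c, by rw [← natCast_zmod_val a, hc, Nat.cast_mul]⟩
  · rintro ⟨b, rfl⟩
    rw [map_mul, map_natCast, natCast_self, zero_mul]

theorem prime_natCast {p n : ℕ} [Fact p.Prime] (hn : 1 < n) : Prime (p : ZMod (p ^ n)) := by
  have hpn : p ∣ p ^ n := dvd_pow_self p (by omega)
  have hdvd (a : ZMod (p ^ n)) := castHom_eq_zero_iff_natCast_dvd hpn a
  refine ⟨?_, ?_, ?_⟩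
  · rw [Ne, natCast_eq_zero_iff]
    intro h
    have := (Nat.pow_dvd_pow_iff_le_right (Fact.out : p.Prime).one_lt).mp
      (by rwa [pow_one] : p ^ n ∣ p ^ 1)
    omega
  · intro hunit
    have := hunit.map (castHom hpn (ZMod p))
    rw [map_natCast, natCast_self] at this
    exact not_isUnit_zero this
  · intro a b hab
    rw [← hdvd, map_mul, mul_eq_zero] at hab
    simpa only [hdvd] using hab

theorem pow_dvd_of_natCast_mul_eq_zero {p k : ℕ} [NeZero p] {w : ZMod (p ^ (k + 1))}
    (hw : (p : ZMod (p ^ (k + 1))) * w = 0) : (p : ZMod (p ^ (k + 1))) ^ k ∣ w := by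
  rw [← natCast_zmod_val w, ← Nat.cast_mul, natCast_eq_zero_iff] at hw
  have hval : p * p ^ k ∣ p * w.val := by rwa [← pow_succ']
  have h := Nat.cast_dvd_cast (α := ZMod (p ^ (k + 1)))
    (Nat.dvd_of_mul_dvd_mul_left (NeZero.pos p) hval)
  rwa [Nat.cast_pow, natCast_zmod_val] at h

end ZMod

theorem two_roots_distinct_at_level_p_in_Zp3_general
    (p : ℕ) (hp : p.Prime)
    (f : Polynomial (ZMod (p ^ 3))) (j α₁ β₁ α₂ β₂ : ZMod (p ^ 3))
    (hα : ¬ ((p : ZMod (p ^ 3)) ∣ (α₁ - α₂)))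
    (h1 : f.eval (j + (p : ZMod (p ^ 3)) * α₁ + (p : ZMod (p ^ 3)) ^ 2 * β₁) = 0)
    (h2 : f.eval (j + (p : ZMod (p ^ 3)) * α₂ + (p : ZMod (p ^ 3)) ^ 2 * β₂) = 0) :
    (p : ZMod (p ^ 3)) ^ 2 ∣ f.eval j ∧
    (p : ZMod (p ^ 3)) ∣ f.derivative.eval j ∧
    ∀ α β : ZMod (p ^ 3), f.eval (j + (p : ZMod (p ^ 3)) * α + (p : ZMod (p ^ 3)) ^ 2 * β) = 0 →
      ∀ γ : ZMod (p ^ 3), f.eval (j + (p : ZMod (p ^ 3)) * α + (p : ZMod (p ^ 3)) ^ 2 * γ) = 0 := by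
  have : Fact p.Prime := ⟨hp⟩
  set π : ZMod (p ^ 3) := (p : ZMod (p ^ 3))
  have hπ3 : π ^ 3 = 0 := by rw [← Nat.cast_pow, ZMod.natCast_self]
  have hann (w : ZMod (p ^ 3)) (hw : π * w = 0) : π ∣ w :=
    (dvd_pow_self π two_ne_zero).trans (ZMod.pow_dvd_of_natCast_mul_eq_zero hw)
  have hnear (α β : ZMod (p ^ 3)) : π ∣ j + π * α + π ^ 2 * β - j := ⟨α + π * β, by ring⟩
  have hshift : j + π * α₁ + π ^ 2 * β₁ =
      j + π * α₂ + π ^ 2 * β₂ + π * (α₁ - α₂ + π * (β₁ - β₂)) := by ring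
  have hu : ¬ π ∣ α₁ - α₂ + π * (β₁ - β₂) := fun h => hα ((dvd_add_left (dvd_mul_right _ _)).mp h)
  have hf' : π ∣ f.derivative.eval j :=
    dvd_eval_of_dvd_sub (dvd_sub_comm.mp (hnear α₂ β₂))
      (dvd_derivative_eval_of_eval_add_eq (ZMod.prime_natCast (by norm_num)) hann hu
        (by rw [← hshift, h1, h2]))
  refine ⟨sq_dvd_eval_of_eval_eq_zero h1 (hnear α₁ β₁) hf', hf', fun α β hroot γ => ?_⟩
  have hsub : j + π * α + π ^ 2 * γ = j + π * α + π ^ 2 * β + π ^ 2 * (γ - β) := by ring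
  rw [hsub]
  exact eval_add_sq_mul_eq_zero hπ3 hf' hroot (hnear α β) _

theorem two_roots_distinct_at_level_p_in_Zp3
    (p : ℕ) (hp : p.Prime) (hp3 : 3 < p)
    (f : Polynomial (ZMod (p ^ 3))) (j α₁ β₁ α₂ β₂ : ZMod (p ^ 3))
    (hα : ¬ ((p : ZMod (p ^ 3)) ∣ (α₁ - α₂)))
    (h1 : f.eval (j + (p : ZMod (p ^ 3)) * α₁ + (p : ZMod (p ^ 3)) ^ 2 * β₁) = 0)
    (h2 : f.eval (j + (p : ZMod (p ^ 3)) * α₂ + (p : ZMod (p ^ 3)) ^ 2 * β₂) = 0) :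
    (p : ZMod (p ^ 3)) ^ 2 ∣ f.eval j ∧
    (p : ZMod (p ^ 3)) ∣ f.derivative.eval j ∧
    ∀ α β : ZMod (p ^ 3), f.eval (j + (p : ZMod (p ^ 3)) * α + (p : ZMod (p ^ 3)) ^ 2 * β) = 0 →
      ∀ γ : ZMod (p ^ 3), f.eval (j + (p : ZMod (p ^ 3)) * α + (p : ZMod (p ^ 3)) ^ 2 * γ) = 0 :=
  two_roots_distinct_at_level_p_in_Zp3_general p hp f j α₁ β₁ α₂ β₂ hα h1 h2
end
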